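/- Let T be a bounded linear operator on a complex Hilbert space H and let n ≥ 2 be an integer. Then w(T)ⁿ ≤ (1/2^{n-1}) w(Tⁿ) + ∑_{k=1}^{n-1} (1/2^k) ‖Tᵏ‖ ‖T‖^{n-k}. -/

import Mathlib

/-!
Buzano's inequality with the unit vector `x`, `a = Tᵏ x` and `b = T† x` gives
`|⟪Tᵏ x, x⟫| |⟪T x, x⟫| ≤ (‖Tᵏ‖ ‖T‖ + |⟪Tᵏ⁺¹ x, x⟫|) / 2`.
Multiplying the bound for `|⟪T x, x⟫|ⁿ` by `|⟪T x, x⟫| ≤ ‖T‖` and applying this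
estimate to its leading term gives the bound for `|⟪T x, x⟫|ⁿ⁺¹`; taking the supremum
over unit vectors `x` yields the theorem.
-/

open scoped InnerProductSpace

variable {H : Type*} [NormedAddCommGroup H] [InnerProductSpace ℂ H] [CompleteSpace H]

/-- The numerical radius of a bounded linear operator. -/
noncomputable def numRadius (T : H →L[ℂ] H) : ℝ :=
  sSup {r : ℝ | ∃ x : H, ‖x‖ = 1 ∧ r = ‖⟪T x, x⟫_ℂ‖}

/-- Buzano's inequality. The reflection of `a` in the line `𝕜 ∙ e` has the norm of `a`
and inner product `2 ⟪a, e⟫ ⟪e, b⟫ - ⟪a, b⟫` with `b`. -/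
theorem norm_inner_mul_inner_le {𝕜 E : Type*} [RCLike 𝕜] [NormedAddCommGroup E]
    [InnerProductSpace 𝕜 E] {e : E} (he : ‖e‖ = 1) (a b : E) :
    ‖⟪a, e⟫_𝕜 * ⟪e, b⟫_𝕜‖ ≤ (‖a‖ * ‖b‖ + ‖⟪a, b⟫_𝕜‖) / 2 := by
  have hr : ⟪(𝕜 ∙ e).reflection a, b⟫_𝕜 = 2 * (⟪a, e⟫_𝕜 * ⟪e, b⟫_𝕜) - ⟪a, b⟫_𝕜 := by
    rw [Submodule.reflection_apply, Submodule.starProjection_unit_singleton 𝕜 he,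
      inner_sub_left, ← ofNat_smul_eq_nsmul (R := 𝕜), inner_smul_left, inner_smul_left,
      inner_conj_symm]
    simp only [map_ofNat]
  set r := (𝕜 ∙ e).reflection a
  have hr_norm : ‖r‖ = ‖a‖ := LinearIsometryEquiv.norm_map _ a
  have : 2 * ‖⟪a, e⟫_𝕜 * ⟪e, b⟫_𝕜‖ ≤ ‖a‖ * ‖b‖ + ‖⟪a, b⟫_𝕜‖ :=
    calc 2 * ‖⟪a, e⟫_𝕜 * ⟪e, b⟫_𝕜‖ = ‖⟪r, b⟫_𝕜 + ⟪a, b⟫_𝕜‖ := by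
          rw [hr, sub_add_cancel, norm_mul (2 : 𝕜), RCLike.norm_ofNat]
      _ ≤ ‖r‖ * ‖b‖ + ‖⟪a, b⟫_𝕜‖ :=
          (norm_add_le _ _).trans (by gcongr; exact norm_inner_le_norm r b)
      _ = ‖a‖ * ‖b‖ + ‖⟪a, b⟫_𝕜‖ := by rw [hr_norm]
  linarith

theorem pow_le_of_mul_le_half_add {a p : ℕ → ℝ} {b : ℝ} (ha : 0 ≤ a 1) (hab : a 1 ≤ b)
    (hp : ∀ k, 0 ≤ p k) (hmul : ∀ k, a k * a 1 ≤ (p k * b + a (k + 1)) / 2) (n : ℕ) :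
    a 1 ^ (n + 1) ≤ 1 / 2 ^ n * a (n + 1) +
      ∑ k ∈ Finset.Icc 1 n, 1 / 2 ^ k * p k * b ^ (n + 1 - k) := by
  induction n with
  | zero => simp
  | succ n ih =>
    set S := ∑ k ∈ Finset.Icc 1 n, 1 / 2 ^ k * p k * b ^ (n + 1 - k)
    have hb : 0 ≤ b := ha.trans hab
    have hS : 0 ≤ S := Finset.sum_nonneg fun k _ => by have := hp k; positivity
    have hsum : ∑ k ∈ Finset.Icc 1 (n + 1), 1 / 2 ^ k * p k * b ^ (n + 1 + 1 - k) =
        S * b + 1 / 2 ^ (n + 1) * p (n + 1) * b := by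
      rw [Finset.sum_Icc_succ_top (by omega), Finset.sum_mul, Nat.add_sub_cancel_left, pow_one]
      congr 1
      refine Finset.sum_congr rfl fun k hk => ?_
      rw [show n + 1 + 1 - k = n + 1 - k + 1 by grind, pow_succ]
      ring
    calc a 1 ^ (n + 1 + 1) = a 1 ^ (n + 1) * a 1 := pow_succ _ _
      _ ≤ (1 / 2 ^ n * a (n + 1) + S) * a 1 := mul_le_mul_of_nonneg_right ih ha
      _ = 1 / 2 ^ n * (a (n + 1) * a 1) + S * a 1 := by ring
      _ ≤ 1 / 2 ^ n * ((p (n + 1) * b + a (n + 1 + 1)) / 2) + S * b := by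
          gcongr
          exact hmul (n + 1)
      _ = _ := by rw [hsum, pow_succ]; ring

namespace ContinuousLinearMap

variable {𝕜 E : Type*} [RCLike 𝕜] [NormedAddCommGroup E] [InnerProductSpace 𝕜 E]

theorem norm_inner_apply_self_le (T : E →L[𝕜] E) {x : E} (hx : ‖x‖ = 1) :
    ‖⟪T x, x⟫_𝕜‖ ≤ ‖T‖ :=
  (norm_inner_le_norm _ _).trans (by rw [hx, mul_one]; exact T.unit_le_opNorm x hx.le)

theorem norm_inner_pow_apply_self_mul_le [CompleteSpace E] (T : E →L[𝕜] E) (k : ℕ) {x : E}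
    (hx : ‖x‖ = 1) :
    ‖⟪(T ^ k) x, x⟫_𝕜‖ * ‖⟪T x, x⟫_𝕜‖ ≤
      (‖T ^ k‖ * ‖T‖ + ‖⟪(T ^ (k + 1)) x, x⟫_𝕜‖) / 2 := by
  have hbuzano := norm_inner_mul_inner_le (𝕜 := 𝕜) hx ((T ^ k) x) (adjoint T x)
  rw [adjoint_inner_right, adjoint_inner_right, norm_mul,
    show T ((T ^ k) x) = (T ^ (k + 1)) x by rw [pow_succ']; rfl] at hbuzano
  have hnorms : ‖(T ^ k) x‖ * ‖adjoint T x‖ ≤ ‖T ^ k‖ * ‖T‖ := by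
    gcongr
    · exact (T ^ k).unit_le_opNorm x hx.le
    · exact ((adjoint T).unit_le_opNorm x hx.le).trans (adjoint.norm_map T).le
  linarith

end ContinuousLinearMap

section numRadius

variable {E : Type*} [NormedAddCommGroup E] [InnerProductSpace ℂ E]

theorem le_numRadius (T : E →L[ℂ] E) {x : E} (hx : ‖x‖ = 1) :
    ‖⟪T x, x⟫_ℂ‖ ≤ numRadius T :=
  le_csSup ⟨‖T‖, by rintro r ⟨y, hy, rfl⟩; exact T.norm_inner_apply_self_le hy⟩
    ⟨x, hx, rfl⟩

theorem numRadius_nonneg (T : E →L[ℂ] E) : 0 ≤ numRadius T :=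
  Real.sSup_nonneg (by rintro r ⟨x, -, rfl⟩; exact norm_nonneg _)

theorem numRadius_pow_le {T : E →L[ℂ] E} {n : ℕ} (hn : n ≠ 0) {c : ℝ} (hc : 0 ≤ c)
    (h : ∀ x : E, ‖x‖ = 1 → ‖⟪T x, x⟫_ℂ‖ ^ n ≤ c) : numRadius T ^ n ≤ c := by
  have hroot : numRadius T ≤ c ^ (n⁻¹ : ℝ) := by
    refine Real.sSup_le (fun r ⟨x, hx, hr⟩ => ?_) (Real.rpow_nonneg hc _)
    refine hr ▸ le_of_pow_le_pow_left₀ hn (Real.rpow_nonneg hc _) ?_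
    rw [Real.rpow_inv_natCast_pow hc hn]
    exact h x hx
  calc numRadius T ^ n ≤ (c ^ (n⁻¹ : ℝ)) ^ n := by gcongr; exact numRadius_nonneg T
    _ = c := Real.rpow_inv_natCast_pow hc hn

end numRadius

theorem cor5 (T : H →L[ℂ] H) (n : ℕ) (hn : 2 ≤ n) :
    (numRadius T) ^ n ≤ (1 / 2 ^ (n - 1)) * numRadius (T ^ n) +
      ∑ k ∈ Finset.Icc 1 (n - 1), (1 / 2 ^ k) * ‖T ^ k‖ * ‖T‖ ^ (n - k) := by
  obtain ⟨m, rfl⟩ : ∃ m, n = m + 1 := ⟨n - 1, by omega⟩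
  rw [Nat.add_sub_cancel]
  have hS : 0 ≤ ∑ k ∈ Finset.Icc 1 m, 1 / 2 ^ k * ‖T ^ k‖ * ‖T‖ ^ (m + 1 - k) := by
    positivity
  refine numRadius_pow_le m.succ_ne_zero
    (add_nonneg (mul_nonneg (by positivity) (numRadius_nonneg _)) hS) fun x hx => ?_
  have hpointwise := pow_le_of_mul_le_half_add
    (a := fun k => ‖⟪(T ^ k) x, x⟫_ℂ‖) (p := (‖T ^ ·‖)) (norm_nonneg _)
    (by simpa only [pow_one] using T.norm_inner_apply_self_le hx) (fun _ => norm_nonneg _)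
    (by simpa only [pow_one] using (T.norm_inner_pow_apply_self_mul_le · hx)) m
  simp only [pow_one] at hpointwise
  refine hpointwise.trans ?_
  gcongr
  exact le_numRadius _ hx
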